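/- For every ν ≥ 0, the function λ_ν(x) = log(1 − (2/x)·Ψ_ν(x)) / log Ψ_ν(x), where Ψ_ν(x) = I_{ν+1}(x)/I_ν(x), satisfies lim_{x→∞} λ_ν(x) = 4/(2ν+1). -/

import Mathlib

/-!
Write `I_ν(x) = (x/2)^ν S_ν((x/2)²)` with the entire series `S_ν(y) = ∑ yᵐ / (m! Γ(m+ν+1))`.
By the Chu–Vandermonde identity the Cauchy product `S_μ S_ρ` has the closed-form coefficients
`Γ(2k+μ+ρ+1) / (k! Γ(k+μ+1) Γ(k+ρ+1) Γ(k+μ+ρ+1))`, and comparing the coefficients of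
`S_ν²`, `S_ν S_{ν+1}` and `S_{ν+1}²` gives the two-sided bound
`(2ν+1) Ψ ≤ x (1 - Ψ²) ≤ (2ν+1) Ψ + (2ν+2) Ψ² / x`.
Hence `Ψ → 1` and `x (1 - Ψ) → ν + 1/2`, so `x log Ψ → -(ν + 1/2)` while
`x log (1 - 2Ψ/x) → -2`, and the quotient tends to `4 / (2ν + 1)`.
-/

open Real Filter Topology

/-- The modified Bessel function of the first kind of real order `ν`. -/
noncomputable def besselI (ν x : ℝ) : ℝ :=
  ∑' m : ℕ, (x / 2) ^ (2 * (m : ℝ) + ν) / ((m.factorial : ℝ) * Real.Gamma ((m : ℝ) + ν + 1))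

/-- `Ψ_ν(x) = I_{ν+1}(x) / I_ν(x)`. -/
noncomputable def psi (ν x : ℝ) : ℝ := besselI (ν + 1) x / besselI ν x

open Finset Polynomial

lemma Gamma_add_nat_eq_descPochhammer_mul {b : ℝ} (hb : 0 < b) (n : ℕ) :
    Gamma (b + n) = (descPochhammer ℤ n).smeval (b + n - 1) * Gamma b := by
  rw [descPochhammer_smeval_eq_ascPochhammer, ascPochhammer_smeval_eq_eval,
    show b + n - 1 - n + 1 = b by ring]
  induction n with
  | zero => simp
  | succ n ih =>
    rw [Nat.cast_succ, ← add_assoc, Gamma_add_one (by positivity), ih, ascPochhammer_succ_eval]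
    ring

lemma Gamma_le_Gamma_add_nat {a : ℝ} (ha : 1 ≤ a) (n : ℕ) : Gamma a ≤ Gamma (a + n) := by
  induction n with
  | zero => simp
  | succ n ih =>
    rw [Nat.cast_succ, ← add_assoc, Gamma_add_one (by positivity)]
    have : 0 < Gamma (a + n) := by positivity
    nlinarith [n.cast_nonneg (α := ℝ)]

noncomputable def besselProdCoeff (μ ρ : ℝ) (k : ℕ) : ℝ :=
  Gamma (2 * k + μ + ρ + 1) /
    (k.factorial * Gamma (k + μ + 1) * Gamma (k + ρ + 1) * Gamma (k + μ + ρ + 1))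

lemma inv_mul_inv_eq_choose_mul_descPochhammer {μ ρ : ℝ} (hμ : 0 ≤ μ) (hρ : 0 ≤ ρ)
    {i j k : ℕ} (hk : i + j = k) :
    1 / (i.factorial * Gamma (i + μ + 1)) * (1 / (j.factorial * Gamma (j + ρ + 1))) =
      k.choose i * ((descPochhammer ℤ i).smeval (k + ρ) * (descPochhammer ℤ j).smeval (k + μ)) /
        (k.factorial * Gamma (k + μ + 1) * Gamma (k + ρ + 1)) := by
  subst hk
  have hμk : Gamma ((i + j : ℕ) + μ + 1) = (descPochhammer ℤ j).smeval ((i + j : ℕ) + μ) *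
      Gamma (i + μ + 1) := by
    convert Gamma_add_nat_eq_descPochhammer_mul (b := i + μ + 1) (by positivity) j using 2 <;>
      push_cast <;> ring_nf
  have hρk : Gamma ((i + j : ℕ) + ρ + 1) = (descPochhammer ℤ i).smeval ((i + j : ℕ) + ρ) *
      Gamma (j + ρ + 1) := by
    convert Gamma_add_nat_eq_descPochhammer_mul (b := j + ρ + 1) (by positivity) i using 2 <;>
      push_cast <;> ring_nf
  have hchoose : ((i + j).choose i : ℝ) * i.factorial * j.factorial = (i + j).factorial := by
    rw [Nat.choose_symm_add]; exact_mod_cast Nat.add_choose_mul_factorial_mul_factorial i j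
  have hC : ((i + j).choose i : ℝ) ≠ 0 := Nat.cast_ne_zero.2 (Nat.choose_pos (by omega)).ne'
  have hGμ : 0 < Gamma (i + μ + 1) := by positivity
  have hGρ : 0 < Gamma (j + ρ + 1) := by positivity
  have hDμ : 0 < (descPochhammer ℤ j).smeval ((i + j : ℕ) + μ) :=
    pos_of_mul_pos_left (hμk ▸ by positivity) hGμ.le
  have hDρ : 0 < (descPochhammer ℤ i).smeval ((i + j : ℕ) + ρ) :=
    pos_of_mul_pos_left (hρk ▸ by positivity) hGρ.le
  rw [hμk, hρk, ← hchoose]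
  field_simp

lemma sum_antidiagonal_eq_besselProdCoeff {μ ρ : ℝ} (hμ : 0 ≤ μ) (hρ : 0 ≤ ρ) (k : ℕ) :
    ∑ ij ∈ antidiagonal k,
      1 / (ij.1.factorial * Gamma (ij.1 + μ + 1)) * (1 / (ij.2.factorial * Gamma (ij.2 + ρ + 1))) =
      besselProdCoeff μ ρ k := by
  rw [sum_congr rfl fun ij hij => inv_mul_inv_eq_choose_mul_descPochhammer hμ hρ
    (mem_antidiagonal.1 hij), ← sum_div, ← Ring.descPochhammer_smeval_add k (Commute.all _ _)]
  have hΓ : Gamma (2 * k + μ + ρ + 1) =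
      (descPochhammer ℤ k).smeval (k + ρ + (k + μ)) * Gamma (k + μ + ρ + 1) := by
    convert Gamma_add_nat_eq_descPochhammer_mul (b := k + μ + ρ + 1) (by positivity) k using 2 <;>
      ring_nf
  have : 0 < Gamma (k + μ + ρ + 1) := by positivity
  rw [besselProdCoeff, hΓ]
  field_simp

section besselProdCoeff

variable {μ ρ : ℝ}

lemma besselProdCoeff_nonneg (hμ : 0 ≤ μ) (hρ : 0 ≤ ρ) (k : ℕ) : 0 ≤ besselProdCoeff μ ρ k := by
  unfold besselProdCoeff
  positivity

lemma besselProdCoeff_comm (μ ρ : ℝ) (k : ℕ) : besselProdCoeff μ ρ k = besselProdCoeff ρ μ k := by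
  simp only [besselProdCoeff, add_right_comm _ μ ρ]
  ring

lemma besselProdCoeff_add_one_right (hμ : 0 ≤ μ) (hρ : 0 ≤ ρ) (k : ℕ) :
    besselProdCoeff μ (ρ + 1) k =
      besselProdCoeff μ ρ k * (2 * k + μ + ρ + 1) / ((k + ρ + 1) * (k + μ + ρ + 1)) := by
  simp only [besselProdCoeff, ← add_assoc]
  rw [Gamma_add_one (s := 2 * k + μ + ρ + 1) (by positivity),
    Gamma_add_one (s := k + ρ + 1) (by positivity),
    Gamma_add_one (s := k + μ + ρ + 1) (by positivity)]
  field_simp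

lemma besselProdCoeff_add_one_add_one (hμ : 0 ≤ μ) (hρ : 0 ≤ ρ) (k : ℕ) :
    besselProdCoeff (μ + 1) (ρ + 1) k =
      besselProdCoeff μ ρ (k + 1) * (k + 1) / (k + μ + ρ + 2) := by
  simp only [besselProdCoeff, Nat.factorial_succ]
  push_cast
  rw [show 2 * ((k : ℝ) + 1) + μ + ρ + 1 = 2 * k + (μ + 1) + (ρ + 1) + 1 by ring,
    show (k : ℝ) + 1 + μ + 1 = k + (μ + 1) + 1 by ring,
    show (k : ℝ) + 1 + ρ + 1 = k + (ρ + 1) + 1 by ring,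
    show (k : ℝ) + (μ + 1) + (ρ + 1) + 1 = (k + μ + ρ + 2) + 1 by ring,
    show (k : ℝ) + 1 + μ + ρ + 1 = k + μ + ρ + 2 by ring,
    Gamma_add_one (s := k + μ + ρ + 2) (by positivity)]
  field_simp

end besselProdCoeff

noncomputable def besselSeries (ν y : ℝ) : ℝ :=
  ∑' m : ℕ, y ^ m / (m.factorial * Gamma (m + ν + 1))

section besselSeries

variable {ν y : ℝ}

lemma summable_besselSeries (hν : 0 ≤ ν) (hy : 0 ≤ y) :
    Summable fun m : ℕ => y ^ m / (m.factorial * Gamma (m + ν + 1)) := by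
  refine .of_nonneg_of_le (fun m => by positivity) (fun m => ?_)
    ((summable_pow_div_factorial y).mul_left (Gamma (ν + 1))⁻¹)
  have hΓ : Gamma (ν + 1) ≤ Gamma (m + ν + 1) := by
    rw [show (m : ℝ) + ν + 1 = ν + 1 + m by ring]
    exact Gamma_le_Gamma_add_nat (by linarith) m
  rw [inv_mul_eq_div, div_div]
  gcongr

lemma besselSeries_pos (hν : 0 ≤ ν) (hy : 0 ≤ y) : 0 < besselSeries ν y := by
  refine (summable_besselSeries hν hy).tsum_pos (fun m => by positivity) 0 ?_
  simp only [pow_zero, Nat.factorial_zero, Nat.cast_one, Nat.cast_zero, zero_add, one_mul]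
  positivity

lemma hasSum_besselSeries_mul {μ ρ : ℝ} (hμ : 0 ≤ μ) (hρ : 0 ≤ ρ) (hy : 0 ≤ y) :
    HasSum (fun k => besselProdCoeff μ ρ k * y ^ k) (besselSeries μ y * besselSeries ρ y) := by
  have hf := summable_norm_iff.2 (summable_besselSeries hμ hy)
  have hg := summable_norm_iff.2 (summable_besselSeries hρ hy)
  have hterm : ∀ k : ℕ, ∑ ij ∈ antidiagonal k,
      y ^ ij.1 / (ij.1.factorial * Gamma (ij.1 + μ + 1)) *
        (y ^ ij.2 / (ij.2.factorial * Gamma (ij.2 + ρ + 1))) = besselProdCoeff μ ρ k * y ^ k := by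
    intro k
    rw [← sum_antidiagonal_eq_besselProdCoeff hμ hρ k, sum_mul]
    refine sum_congr rfl fun ij hij => ?_
    rw [← mem_antidiagonal.1 hij, pow_add]
    ring
  rw [besselSeries, besselSeries, tsum_mul_tsum_eq_tsum_sum_antidiagonal_of_summable_norm hf hg]
  simp only [hterm]
  exact ((summable_norm_sum_mul_antidiagonal_of_summable_norm hf hg).of_norm.congr hterm).hasSum

/-- The series of `y S_{μ+1}(y) S_{ρ+1}(y)`, reindexed so as to compare coefficientwise with
that of `S_μ(y) S_ρ(y)`. -/
lemma hasSum_besselProdCoeff_mul_div {μ ρ : ℝ} (hμ : 0 ≤ μ) (hρ : 0 ≤ ρ) (hy : 0 ≤ y) :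
    HasSum (fun k : ℕ => besselProdCoeff μ ρ k * (k / (k + μ + ρ + 1)) * y ^ k)
      (y * (besselSeries (μ + 1) y * besselSeries (ρ + 1) y)) := by
  have h := (hasSum_besselSeries_mul (by linarith : 0 ≤ μ + 1) (by linarith : 0 ≤ ρ + 1)
    hy).mul_left y
  set f : ℕ → ℝ := fun k => besselProdCoeff μ ρ k * (k / (k + μ + ρ + 1)) * y ^ k with hf
  have hshift : HasSum (fun k => f (k + 1))
      (y * (besselSeries (μ + 1) y * besselSeries (ρ + 1) y)) := by
    refine h.congr_fun fun k => ?_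
    simp only [hf, besselProdCoeff_add_one_add_one hμ hρ]
    push_cast
    ring_nf
  simpa [hf] using hshift.zero_add

lemma besselSeries_ineq_upper (hν : 0 ≤ ν) (hy : 0 ≤ y) :
    (2 * ν + 1) * (besselSeries ν y * besselSeries (ν + 1) y) +
        2 * (y * (besselSeries (ν + 1) y * besselSeries (ν + 1) y)) ≤
      2 * (besselSeries ν y * besselSeries ν y) := by
  have hν1 : 0 ≤ ν + 1 := by linarith
  refine hasSum_le (fun k => ?_)
    (((hasSum_besselSeries_mul hν hν1 hy).mul_left _).add
      ((hasSum_besselProdCoeff_mul_div hν hν hy).mul_left _))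
    ((hasSum_besselSeries_mul hν hν hy).mul_left _)
  have hk : (0 : ℝ) ≤ k := k.cast_nonneg
  have hpos : 0 ≤ besselProdCoeff ν ν k * y ^ k :=
    mul_nonneg (besselProdCoeff_nonneg hν hν k) (pow_nonneg hy k)
  calc (2 * ν + 1) * (besselProdCoeff ν (ν + 1) k * y ^ k) +
        2 * (besselProdCoeff ν ν k * (k / (k + ν + ν + 1)) * y ^ k)
      = besselProdCoeff ν ν k * y ^ k * (2 - (2 * ν + 1) / ((k + ν + 1) * (k + ν + ν + 1))) := by
        rw [besselProdCoeff_add_one_right hν hν]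
        field_simp
        ring
    _ ≤ 2 * (besselProdCoeff ν ν k * y ^ k) := by
        nlinarith [show 0 ≤ (2 * ν + 1) / ((k + ν + 1) * (k + ν + ν + 1)) by positivity]

lemma besselSeries_ineq_lower (hν : 0 ≤ ν) (hy : 0 ≤ y) :
    4 * (besselSeries ν y * besselSeries ν y) ≤
      2 * (2 * ν + 1) * (besselSeries ν y * besselSeries (ν + 1) y) +
        (2 * ν + 2) * (besselSeries (ν + 1) y * besselSeries (ν + 1) y) +
        4 * (y * (besselSeries (ν + 1) y * besselSeries (ν + 1) y)) := by
  have hν1 : 0 ≤ ν + 1 := by linarith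
  refine hasSum_le (fun k => ?_) ((hasSum_besselSeries_mul hν hν hy).mul_left _)
    ((((hasSum_besselSeries_mul hν hν1 hy).mul_left _).add
      ((hasSum_besselSeries_mul hν1 hν1 hy).mul_left _)).add
      ((hasSum_besselProdCoeff_mul_div hν hν hy).mul_left _))
  have hk : (0 : ℝ) ≤ k := k.cast_nonneg
  have hpos : 0 ≤ besselProdCoeff ν ν k * y ^ k :=
    mul_nonneg (besselProdCoeff_nonneg hν hν k) (pow_nonneg hy k)
  calc 4 * (besselProdCoeff ν ν k * y ^ k)
      ≤ besselProdCoeff ν ν k * y ^ k *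
          (4 + 2 * k * (2 * ν + 3) / ((k + ν + 1) * (k + ν + ν + 1) * (k + ν + ν + 2))) := by
        nlinarith [show 0 ≤ 2 * k * (2 * ν + 3) / ((k + ν + 1) * (k + ν + ν + 1) * (k + ν + ν + 2))
          by positivity]
    _ = 2 * (2 * ν + 1) * (besselProdCoeff ν (ν + 1) k * y ^ k) +
          (2 * ν + 2) * (besselProdCoeff (ν + 1) (ν + 1) k * y ^ k) +
          4 * (besselProdCoeff ν ν k * (k / (k + ν + ν + 1)) * y ^ k) := by
        rw [besselProdCoeff_add_one_right hν1 hν, besselProdCoeff_comm (ν + 1) ν,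
          besselProdCoeff_add_one_right hν hν]
        field_simp
        ring

end besselSeries

lemma besselI_eq_rpow_mul_besselSeries (ν : ℝ) {x : ℝ} (hx : 0 < x) :
    besselI ν x = (x / 2) ^ ν * besselSeries ν ((x / 2) ^ 2) := by
  rw [besselI, besselSeries, ← tsum_mul_left]
  refine tsum_congr fun m => ?_
  rw [mul_div_assoc', ← pow_mul, ← rpow_natCast, ← rpow_add (by positivity)]
  push_cast
  ring_nf

lemma psi_eq_div_besselSeries (ν : ℝ) {x : ℝ} (hx : 0 < x) :
    psi ν x = x / 2 * besselSeries (ν + 1) ((x / 2) ^ 2) / besselSeries ν ((x / 2) ^ 2) := by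
  rw [psi, besselI_eq_rpow_mul_besselSeries _ hx, besselI_eq_rpow_mul_besselSeries _ hx,
    rpow_add_one (by positivity), mul_comm ((x / 2) ^ ν), mul_assoc, mul_left_comm,
    mul_div_mul_left _ _ (by positivity)]

section psi

variable {ν x : ℝ}

lemma psi_pos (hν : 0 ≤ ν) (hx : 0 < x) : 0 < psi ν x := by
  have h0 := besselSeries_pos hν (sq_nonneg (x / 2))
  have h1 := besselSeries_pos (by linarith : 0 ≤ ν + 1) (sq_nonneg (x / 2))
  rw [psi_eq_div_besselSeries ν hx]
  positivity

lemma psi_ineq_upper (hν : 0 ≤ ν) (hx : 0 < x) :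
    (2 * ν + 1) * psi ν x ≤ x * (1 - psi ν x ^ 2) := by
  have h := besselSeries_ineq_upper hν (sq_nonneg (x / 2))
  have h0 := besselSeries_pos hν (sq_nonneg (x / 2))
  rw [psi_eq_div_besselSeries ν hx]
  set S₀ := besselSeries ν ((x / 2) ^ 2)
  set S₁ := besselSeries (ν + 1) ((x / 2) ^ 2)
  have key : x * (1 - (x / 2 * S₁ / S₀) ^ 2) - (2 * ν + 1) * (x / 2 * S₁ / S₀) =
      x / 2 / S₀ ^ 2 *
        (2 * (S₀ * S₀) - (2 * ν + 1) * (S₀ * S₁) - 2 * ((x / 2) ^ 2 * (S₁ * S₁))) := by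
    field_simp
    ring
  rw [← sub_nonneg, key]
  exact mul_nonneg (by positivity) (by linarith)

lemma psi_ineq_lower (hν : 0 ≤ ν) (hx : 0 < x) :
    x ^ 2 * (1 - psi ν x ^ 2) ≤ (2 * ν + 1) * x * psi ν x + (2 * ν + 2) * psi ν x ^ 2 := by
  have h := besselSeries_ineq_lower hν (sq_nonneg (x / 2))
  have h0 := besselSeries_pos hν (sq_nonneg (x / 2))
  rw [psi_eq_div_besselSeries ν hx]
  set S₀ := besselSeries ν ((x / 2) ^ 2)
  set S₁ := besselSeries (ν + 1) ((x / 2) ^ 2)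
  have key : (2 * ν + 1) * x * (x / 2 * S₁ / S₀) + (2 * ν + 2) * (x / 2 * S₁ / S₀) ^ 2 -
        x ^ 2 * (1 - (x / 2 * S₁ / S₀) ^ 2) =
      (x / 2) ^ 2 / S₀ ^ 2 * (2 * (2 * ν + 1) * (S₀ * S₁) + (2 * ν + 2) * (S₁ * S₁) +
        4 * ((x / 2) ^ 2 * (S₁ * S₁)) - 4 * (S₀ * S₀)) := by
    field_simp
    ring
  rw [← sub_nonneg, key]
  exact mul_nonneg (by positivity) (by linarith)

lemma psi_lt_one (hν : 0 ≤ ν) (hx : 0 < x) : psi ν x < 1 := by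
  have h := psi_ineq_upper hν hx
  have hψ := psi_pos hν hx
  by_contra! h1
  have : 1 ≤ psi ν x ^ 2 := by nlinarith
  nlinarith [mul_pos (by linarith : (0 : ℝ) < 2 * ν + 1) hψ, mul_nonneg hx.le (sub_nonneg.2 this)]

lemma mul_one_sub_psi_sq_le (hν : 0 ≤ ν) (hx : 0 < x) :
    x * (1 - psi ν x ^ 2) ≤ (2 * ν + 1) * psi ν x + (2 * ν + 2) / x := by
  have h := psi_ineq_lower hν hx
  have hψ := psi_pos hν hx
  have hψ1 := psi_lt_one hν hx
  rw [← mul_le_mul_iff_of_pos_left hx, mul_add, mul_div_cancel₀ _ hx.ne']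
  nlinarith [mul_le_mul_of_nonneg_left (by nlinarith : psi ν x ^ 2 ≤ 1)
    (by linarith : (0 : ℝ) ≤ 2 * ν + 2)]

end psi

lemma tendsto_mul_log_of_tendsto_mul_sub_one {α : Type*} {l : Filter α} {f g : α → ℝ} {L : ℝ}
    (hf : ∀ᶠ a in l, 0 ≤ f a) (hg_pos : ∀ᶠ a in l, 0 < g a) (hg : Tendsto g l (𝓝 1))
    (h : Tendsto (fun a => f a * (g a - 1)) l (𝓝 L)) :
    Tendsto (fun a => f a * log (g a)) l (𝓝 L) := by
  have hlow := h.div hg one_ne_zero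
  rw [div_one] at hlow
  refine tendsto_of_tendsto_of_tendsto_of_le_of_le' hlow h ?_ ?_
  · filter_upwards [hf, hg_pos] with a hfa hga
    rw [Pi.div_apply, mul_div_assoc]
    refine mul_le_mul_of_nonneg_left ?_ hfa
    simpa [sub_div, div_self hga.ne'] using one_sub_inv_le_log_of_pos hga
  · filter_upwards [hf, hg_pos] with a hfa hga
    exact mul_le_mul_of_nonneg_left (log_le_sub_one_of_pos hga) hfa

section limits

variable {ν : ℝ}

lemma tendsto_psi_atTop (hν : 0 ≤ ν) : Tendsto (psi ν) atTop (𝓝 1) := by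
  have hbound : Tendsto (fun x : ℝ => ((2 * ν + 1) + (2 * ν + 2) / x) / x) atTop (𝓝 0) :=
    (tendsto_const_nhds.add (tendsto_const_nhds.div_atTop tendsto_id)).div_atTop tendsto_id
  have hgap : Tendsto (fun x => 1 - psi ν x) atTop (𝓝 0) := by
    refine squeeze_zero' ?_ ?_ hbound
    · filter_upwards [eventually_gt_atTop 0] with x hx
      linarith [psi_lt_one hν hx]
    · filter_upwards [eventually_gt_atTop 0] with x hx
      have hψ := psi_pos hν hx
      have hψ1 := psi_lt_one hν hx
      rw [le_div_iff₀ hx]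
      nlinarith [mul_one_sub_psi_sq_le hν hx, mul_le_mul_of_nonneg_left
        (by nlinarith : psi ν x ^ 2 ≤ psi ν x) hx.le]
  simpa using (tendsto_const_nhds (x := (1 : ℝ))).sub hgap

lemma tendsto_mul_one_sub_psi_atTop (hν : 0 ≤ ν) :
    Tendsto (fun x => x * (1 - psi ν x)) atTop (𝓝 ((2 * ν + 1) / 2)) := by
  have hψ := tendsto_psi_atTop hν
  have hsq : Tendsto (fun x => x * (1 - psi ν x ^ 2)) atTop (𝓝 (2 * ν + 1)) := by
    have hlow : Tendsto (fun x => (2 * ν + 1) * psi ν x) atTop (𝓝 (2 * ν + 1)) := by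
      simpa using hψ.const_mul (2 * ν + 1)
    have hup : Tendsto (fun x => (2 * ν + 1) * psi ν x + (2 * ν + 2) / x) atTop
        (𝓝 (2 * ν + 1)) := by
      simpa using hlow.add (tendsto_const_nhds.div_atTop tendsto_id)
    refine tendsto_of_tendsto_of_tendsto_of_le_of_le' hlow hup ?_ ?_
    · filter_upwards [eventually_gt_atTop 0] with x hx
      exact psi_ineq_upper hν hx
    · filter_upwards [eventually_gt_atTop 0] with x hx
      exact mul_one_sub_psi_sq_le hν hx
  have := hsq.div (tendsto_const_nhds.add hψ) (by norm_num : (1 : ℝ) + 1 ≠ 0)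
  rw [one_add_one_eq_two] at this
  refine this.congr' ?_
  filter_upwards [eventually_gt_atTop 0] with x hx
  have : 1 + psi ν x ≠ 0 := by linarith [psi_pos hν hx]
  rw [Pi.div_apply, div_eq_iff this]
  ring

lemma tendsto_mul_log_one_sub_psi (hν : 0 ≤ ν) :
    Tendsto (fun x => x * log (1 - 2 / x * psi ν x)) atTop (𝓝 (-2)) := by
  have hψ := tendsto_psi_atTop hν
  refine tendsto_mul_log_of_tendsto_mul_sub_one (eventually_ge_atTop 0) ?_ ?_ ?_
  · filter_upwards [eventually_gt_atTop 2] with x hx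
    have hψ1 := psi_lt_one hν (by linarith : (0 : ℝ) < x)
    rw [sub_pos, div_mul_eq_mul_div, div_lt_one (by linarith)]
    linarith
  · simpa using tendsto_const_nhds.sub ((tendsto_const_nhds.div_atTop tendsto_id).mul hψ)
  · refine (by simpa using hψ.const_mul (-2) : Tendsto (fun x => -2 * psi ν x) atTop _).congr' ?_
    filter_upwards [eventually_gt_atTop 0] with x hx
    field_simp
    ring

lemma tendsto_mul_log_psi (hν : 0 ≤ ν) :
    Tendsto (fun x => x * log (psi ν x)) atTop (𝓝 (-((2 * ν + 1) / 2))) := by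
  refine tendsto_mul_log_of_tendsto_mul_sub_one (eventually_ge_atTop 0) ?_
    (tendsto_psi_atTop hν) ?_
  · filter_upwards [eventually_gt_atTop 0] with x hx
    exact psi_pos hν hx
  · refine (tendsto_mul_one_sub_psi_atTop hν).neg.congr fun x => ?_
    ring

end limits

theorem stmt_17 (ν : ℝ) (hν : 0 ≤ ν) :
    Filter.Tendsto (fun x : ℝ => Real.log (1 - (2 / x) * psi ν x) / Real.log (psi ν x))
      Filter.atTop (nhds (4 / (2 * ν + 1))) := by
  have hlim := (tendsto_mul_log_one_sub_psi hν).div (tendsto_mul_log_psi hν)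
    (by linarith : -((2 * ν + 1) / 2) ≠ 0)
  rw [show (-2 : ℝ) / -((2 * ν + 1) / 2) = 4 / (2 * ν + 1) by field_simp; ring] at hlim
  refine hlim.congr' ?_
  filter_upwards [eventually_gt_atTop 0] with x hx
  exact mul_div_mul_left _ _ hx.ne'
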